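/- arXiv:1604.04646 — 5 statements merged into one kernel-verified Lean document; each statement's English description precedes it below -/
import Mathlib

section
/- Fix points p₀, p₁, p₂, p₃ ∈ ℝ², a constant k > 0, and δ with 0 < δ < 1/2. Then the functions u ↦ C_ω(u) = (B₀(u)·p₀ + ω·B₁(u)·p₁ + kω·B₂(u)·p₂ + B₃(u)·p₃) / (B₀(u) + ω·B₁(u) + kω·B₂(u) + B₃(u)) converge uniformly on the interval [δ, 1−δ] to the function u ↦ (B₁(u)·p₁ + k·B₂(u)·p₂) / (B₁(u) + k·B₂(u)) as ω → +∞. -/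
open Filter Topology

/-- The cubic Bernstein polynomials `B j u = (3 choose j) u^j (1-u)^(3-j)`. -/
noncomputable def cubicBernstein (j : ℕ) (u : ℝ) : ℝ :=
  (Nat.choose 3 j : ℝ) * u ^ j * (1 - u) ^ (3 - j)

/-!
Writing `a = B₀ + B₃`, `b = B₁ + k B₂`, `P = B₀ p₀ + B₃ p₃`, `Q = B₁ p₁ + k B₂ p₂`, the curve is
`(a + ω b)⁻¹ (P + ω Q)` and its distance to `b⁻¹ Q` is `(a + ω b)⁻¹ ‖P - (a / b) Q‖`.
On the compact interval `[δ, 1 - δ]` the Bernstein polynomials are positive, so `b⁻¹` and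
`P - (a / b) Q` are continuous, hence bounded, and the error is `O(1 / ω)` uniformly in `u`.
-/

theorem tendstoUniformlyOn_of_dist_le {ι α β : Type*} [PseudoMetricSpace β] {p : Filter ι}
    {F : ι → α → β} {f : α → β} {s : Set α} {r : ι → ℝ} (hr : Tendsto r p (𝓝 0))
    (hF : ∀ᶠ i in p, ∀ x ∈ s, dist (f x) (F i x) ≤ r i) : TendstoUniformlyOn F f p s := by
  rw [Metric.tendstoUniformlyOn_iff]
  intro ε hε
  filter_upwards [hF, hr.eventually (gt_mem_nhds hε)] with i hi hri x hx
  exact (hi x hx).trans_lt hri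

theorem inv_add_mul_smul_add_smul_sub_inv_smul {E : Type*} [AddCommGroup E] [Module ℝ E]
    {a b ω : ℝ} (hb : b ≠ 0) (hab : a + ω * b ≠ 0) (P Q : E) :
    (a + ω * b)⁻¹ • (P + ω • Q) - b⁻¹ • Q = (a + ω * b)⁻¹ • (P - (a / b) • Q) := by
  have hcoef : b⁻¹ = (a + ω * b)⁻¹ * (a / b + ω) := by
    rw [eq_inv_mul_iff_mul_eq₀ hab]
    field_simp
  rw [hcoef, mul_smul, ← smul_sub]
  congr 1
  module

theorem inv_add_mul_le_inv_mul_inv {a b ω : ℝ} (ha : 0 ≤ a) (hb : 0 < b) (hω : 0 < ω) :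
    (a + ω * b)⁻¹ ≤ ω⁻¹ * b⁻¹ := by
  rw [← mul_inv]
  exact inv_anti₀ (by positivity) (by linarith)

theorem tendstoUniformlyOn_inv_add_mul_smul_add_smul {α E : Type*} [TopologicalSpace α]
    [NormedAddCommGroup E] [NormedSpace ℝ E] {s : Set α} (hs : IsCompact s) {a b : α → ℝ}
    {P Q : α → E} (ha : ContinuousOn a s) (hb : ContinuousOn b s) (hP : ContinuousOn P s)
    (hQ : ContinuousOn Q s) (ha₀ : ∀ x ∈ s, 0 ≤ a x) (hb₀ : ∀ x ∈ s, 0 < b x) :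
    TendstoUniformlyOn (fun ω x => (a x + ω * b x)⁻¹ • (P x + ω • Q x))
      (fun x => (b x)⁻¹ • Q x) atTop s := by
  have hb_ne : ∀ x ∈ s, b x ≠ 0 := fun x hx => (hb₀ x hx).ne'
  obtain ⟨C, hC⟩ := hs.exists_bound_of_continuousOn (hb.inv₀ hb_ne)
  obtain ⟨R, hR⟩ := hs.exists_bound_of_continuousOn (hP.sub ((ha.div hb hb_ne).smul hQ))
  refine tendstoUniformlyOn_of_dist_le (r := fun ω => ω⁻¹ * C * R)
    (by simpa using (tendsto_inv_atTop_zero.mul_const C).mul_const R) ?_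
  filter_upwards [eventually_gt_atTop 0] with ω hω x hx
  have hden : 0 < a x + ω * b x := add_pos_of_nonneg_of_pos (ha₀ x hx) (mul_pos hω (hb₀ x hx))
  rw [dist_comm, dist_eq_norm, inv_add_mul_smul_add_smul_sub_inv_smul (hb_ne x hx) hden.ne',
    norm_smul, Real.norm_of_nonneg (inv_nonneg.2 hden.le)]
  have hinv : (b x)⁻¹ ≤ C := (Real.le_norm_self _).trans (hC x hx)
  have hC₀ : 0 ≤ C := (norm_nonneg _).trans (hC x hx)
  have hcoef : (a x + ω * b x)⁻¹ ≤ ω⁻¹ * C :=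
    (inv_add_mul_le_inv_mul_inv (ha₀ x hx) (hb₀ x hx) hω).trans (by gcongr)
  exact mul_le_mul hcoef (hR x hx) (norm_nonneg _) (by positivity)

@[fun_prop]
theorem continuous_cubicBernstein (j : ℕ) : Continuous (cubicBernstein j) := by
  unfold cubicBernstein
  fun_prop

theorem cubicBernstein_pos {j : ℕ} (hj : j ≤ 3) {u : ℝ} (hu₀ : 0 < u) (hu₁ : u < 1) :
    0 < cubicBernstein j u := by
  have hchoose : 0 < (Nat.choose 3 j : ℝ) := by exact_mod_cast Nat.choose_pos hj
  have hu₁' : 0 < 1 - u := by linarith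
  unfold cubicBernstein
  positivity

theorem nurbs_weights_same_order_uniform_convergence_general
    (p₀ p₁ p₂ p₃ : EuclideanSpace ℝ (Fin 2)) (k : ℝ) (hk : 0 < k)
    (δ : ℝ) (hδ : 0 < δ) :
    TendstoUniformlyOn
      (fun ω : ℝ => fun u : ℝ =>
        (cubicBernstein 0 u + ω * cubicBernstein 1 u + k * ω * cubicBernstein 2 u +
            cubicBernstein 3 u)⁻¹ •
          ((cubicBernstein 0 u) • p₀ + (ω * cubicBernstein 1 u) • p₁ +
            (k * ω * cubicBernstein 2 u) • p₂ + (cubicBernstein 3 u) • p₃))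
      (fun u : ℝ =>
        (cubicBernstein 1 u + k * cubicBernstein 2 u)⁻¹ •
          ((cubicBernstein 1 u) • p₁ + (k * cubicBernstein 2 u) • p₂))
      atTop (Set.Icc δ (1 - δ)) := by
  have hB {j : ℕ} (hj : j ≤ 3) {u : ℝ} (hu : u ∈ Set.Icc δ (1 - δ)) : 0 < cubicBernstein j u :=
    cubicBernstein_pos hj (hδ.trans_le hu.1) (by linarith [hu.2])
  refine (tendstoUniformlyOn_inv_add_mul_smul_add_smul isCompact_Icc
    (a := fun u => cubicBernstein 0 u + cubicBernstein 3 u)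
    (b := fun u => cubicBernstein 1 u + k * cubicBernstein 2 u)
    (P := fun u => cubicBernstein 0 u • p₀ + cubicBernstein 3 u • p₃)
    (Q := fun u => cubicBernstein 1 u • p₁ + (k * cubicBernstein 2 u) • p₂)
    (by fun_prop) (by fun_prop) (by fun_prop) (by fun_prop)
    (fun u hu => add_nonneg (hB (by norm_num) hu).le (hB le_rfl hu).le)
    (fun u hu => add_pos (hB (by norm_num) hu) (mul_pos hk (hB (by norm_num) hu)))).congr
    (Eventually.of_forall fun ω u _ => ?_)
  dsimp only
  congr 1
  · ring
  · module

/-- Fix points `p₀, p₁, p₂, p₃ ∈ ℝ²`, `k > 0`, and `0 < δ < 1/2`.  The rational cubic Bézier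
curves with weights `(1, ω, kω, 1)` converge uniformly on `[δ, 1-δ]` to
`u ↦ (B₁(u)·p₁ + k·B₂(u)·p₂) / (B₁(u) + k·B₂(u))` as `ω → +∞`. -/
theorem nurbs_weights_same_order_uniform_convergence
    (p₀ p₁ p₂ p₃ : EuclideanSpace ℝ (Fin 2)) (k : ℝ) (hk : 0 < k)
    (δ : ℝ) (hδ : 0 < δ) (hδ' : δ < 1 / 2) :
    TendstoUniformlyOn
      (fun ω : ℝ => fun u : ℝ =>
        (cubicBernstein 0 u + ω * cubicBernstein 1 u + k * ω * cubicBernstein 2 u +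
            cubicBernstein 3 u)⁻¹ •
          ((cubicBernstein 0 u) • p₀ + (ω * cubicBernstein 1 u) • p₁ +
            (k * ω * cubicBernstein 2 u) • p₂ + (cubicBernstein 3 u) • p₃))
      (fun u : ℝ =>
        (cubicBernstein 1 u + k * cubicBernstein 2 u)⁻¹ •
          ((cubicBernstein 1 u) • p₁ + (k * cubicBernstein 2 u) • p₂))
      atTop (Set.Icc δ (1 - δ)) :=
  nurbs_weights_same_order_uniform_convergence_general p₀ p₁ p₂ p₃ k hk δ hδ
end

section
/- Let s be a finite index set, k ∈ s, a < b real numbers, and for each j ∈ s let N_j : ℝ → ℝ be continuous on [a,b] with N_j(u) ≥ 0 for all u ∈ [a,b], and suppose N_k(u) > 0 for all u ∈ [a,b]. Fix positive weights ω_j > 0 for j ∈ s, j ≠ k. Then the rational basis functions u ↦ R_k^ω(u) = N_k(u)·ω / (N_k(u)·ω + Σ_{j ∈ s, j ≠ k} N_j(u)·ω_j) converge uniformly on [a,b] to the constant function 1 as ω → +∞. -/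
/-!
As `ω → ∞` the numerator `N k · ω` dominates the denominator uniformly: on the compact interval
`N k` is bounded below by some `m > 0` and the sum `Σ_{j ≠ k} N j ω j` lies between `0` and
some `M`, so `|1 - R_k^ω| ≤ M / (m ω)` on all of `[a,b]`.
-/

open Filter Topology

lemma dist_one_div_add_le {p q m M : ℝ} (hm : 0 < m) (hmp : m ≤ p) (hq : 0 ≤ q) (hqM : q ≤ M) :
    dist 1 (p / (p + q)) ≤ M / m := by
  have hpq : 0 < p + q := by linarith
  have hone : 1 - p / (p + q) = q / (p + q) := by field_simp; ring
  rw [Real.dist_eq, hone, abs_of_nonneg (div_nonneg hq hpq.le)]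
  exact div_le_div₀ (hq.trans hqM) hqM hm (by linarith)

lemma tendstoUniformlyOn_mul_div_mul_add_one {X : Type*} {s : Set X} {f g : X → ℝ} {m M : ℝ}
    (hm : 0 < m) (hf : ∀ x ∈ s, m ≤ f x) (hg : ∀ x ∈ s, 0 ≤ g x) (hgM : ∀ x ∈ s, g x ≤ M) :
    TendstoUniformlyOn (fun w x => f x * w / (f x * w + g x)) (fun _ => 1) atTop s := by
  have hbound : Tendsto (fun w : ℝ => M / (m * w)) atTop (𝓝 0) :=
    tendsto_const_nhds.div_atTop (tendsto_id.const_mul_atTop hm)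
  rw [Metric.tendstoUniformlyOn_iff]
  intro ε hε
  filter_upwards [hbound.eventually (gt_mem_nhds hε), eventually_gt_atTop 0]
    with w hwε hw x hx
  exact (dist_one_div_add_le (by positivity)
    (mul_le_mul_of_nonneg_right (hf x hx) hw.le) (hg x hx) (hgM x hx)).trans_lt hwε

theorem rational_basis_tendstoUniformly_one_general {ι : Type*} [DecidableEq ι]
    (s : Finset ι) (k : ι) (hk : k ∈ s) (a b : ℝ)
    (N : ι → ℝ → ℝ)
    (hNcont : ∀ j ∈ s, ContinuousOn (N j) (Set.Icc a b))
    (hNnonneg : ∀ j ∈ s, ∀ u ∈ Set.Icc a b, 0 ≤ N j u)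
    (hNk : ∀ u ∈ Set.Icc a b, 0 < N k u)
    (ω : ι → ℝ) (hω : ∀ j ∈ s, j ≠ k → 0 < ω j) :
    TendstoUniformlyOn
      (fun w : ℝ => fun u : ℝ =>
        N k u * w / (N k u * w + ∑ j ∈ s.erase k, N j u * ω j))
      (fun _ : ℝ => (1 : ℝ)) atTop (Set.Icc a b) := by
  obtain ⟨m, hm, hmN⟩ := isCompact_Icc.exists_forall_le' (hNcont k hk) hNk
  have hsum_cont : ContinuousOn (fun u => ∑ j ∈ s.erase k, N j u * ω j) (Set.Icc a b) :=
    continuousOn_finsetSum _ fun j hj => (hNcont j (Finset.mem_of_mem_erase hj)).mul_const _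
  obtain ⟨M, hM⟩ := isCompact_Icc.bddAbove_image hsum_cont
  refine tendstoUniformlyOn_mul_div_mul_add_one hm hmN (fun u hu => ?_)
    (fun u hu => hM ⟨u, hu, rfl⟩)
  refine Finset.sum_nonneg fun j hj => mul_nonneg ?_ ?_
  · exact hNnonneg j (Finset.mem_of_mem_erase hj) u hu
  · exact (hω j (Finset.mem_of_mem_erase hj) (Finset.ne_of_mem_erase hj)).le

/-- Let `s` be a finite index set, `k ∈ s`, `a < b`, and for each `j ∈ s` let `N j` be continuous
and nonnegative on `[a,b]`, with `N k` strictly positive on `[a,b]`.  For fixed positive weights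
`ω j` (`j ≠ k`), the rational basis functions
`u ↦ N k u · ω / (N k u · ω + Σ_{j ∈ s, j ≠ k} N j u · ω j)` converge uniformly on `[a,b]`
to the constant function `1` as `ω → +∞`. -/
theorem rational_basis_tendstoUniformly_one {ι : Type*} [DecidableEq ι]
    (s : Finset ι) (k : ι) (hk : k ∈ s) (a b : ℝ) (hab : a < b)
    (N : ι → ℝ → ℝ)
    (hNcont : ∀ j ∈ s, ContinuousOn (N j) (Set.Icc a b))
    (hNnonneg : ∀ j ∈ s, ∀ u ∈ Set.Icc a b, 0 ≤ N j u)
    (hNk : ∀ u ∈ Set.Icc a b, 0 < N k u)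
    (ω : ι → ℝ) (hω : ∀ j ∈ s, j ≠ k → 0 < ω j) :
    TendstoUniformlyOn
      (fun w : ℝ => fun u : ℝ =>
        N k u * w / (N k u * w + ∑ j ∈ s.erase k, N j u * ω j))
      (fun _ : ℝ => (1 : ℝ)) atTop (Set.Icc a b) :=
  rational_basis_tendstoUniformly_one_general s k hk a b N hNcont hNnonneg hNk ω hω
end

section
/- Let s be a finite index set, k ∈ s, a < b real numbers, and for each j ∈ s let N_j : ℝ → ℝ be continuous on [a,b] with N_j(u) ≥ 0 for all u ∈ [a,b], and suppose N_k(u) > 0 for all u ∈ [a,b]. Fix control points p_j ∈ ℝ² for j ∈ s and positive weights ω_j > 0 for j ≠ k. Then the curves u ↦ C_ω(u) = (N_k(u)·ω·p_k + Σ_{j ≠ k} N_j(u)·ω_j·p_j) / (N_k(u)·ω + Σ_{j ≠ k} N_j(u)·ω_j) converge uniformly on [a,b] to the constant function u ↦ p_k as ω → +∞. -/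
/-!
Write `D = N_k(u) ω + S(u)` for the denominator, with `S = Σ_{j ≠ k} N_j ω_j` and
`V = Σ_{j ≠ k} N_j ω_j p_j`. Then `p_k - C_ω(u) = D⁻¹ (S p_k - V)`. By compactness of `[a, b]`,
`N_k ≥ m > 0` and `‖S p_k - V‖ ≤ K` there, so `‖p_k - C_ω(u)‖ ≤ K / (m ω)` uniformly in `u`.
-/

open Filter Topology

theorem tendstoUniformlyOn_of_forall_dist_le {α β ι : Type*} [PseudoMetricSpace β]
    {F : ι → α → β} {f : α → β} {l : Filter ι} {s : Set α} {g : ι → ℝ}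
    (hg : Tendsto g l (𝓝 0)) (h : ∀ᶠ i in l, ∀ x ∈ s, dist (f x) (F i x) ≤ g i) :
    TendstoUniformlyOn F f l s := by
  rw [Metric.tendstoUniformlyOn_iff]
  intro ε hε
  filter_upwards [h, hg.eventually (gt_mem_nhds hε)] with i hi hgi x hx
  exact (hi x hx).trans_lt hgi

theorem sub_inv_smul_add_smul_add {𝕜 E : Type*} [Field 𝕜] [AddCommGroup E] [Module 𝕜 E]
    {x y : 𝕜} (h : x + y ≠ 0) (p v : E) :
    p - (x + y)⁻¹ • (x • p + v) = (x + y)⁻¹ • (y • p - v) := by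
  calc p - (x + y)⁻¹ • (x • p + v) = (x + y)⁻¹ • ((x + y) • p) - (x + y)⁻¹ • (x • p + v) := by
        rw [inv_smul_smul₀ h]
    _ = (x + y)⁻¹ • (y • p - v) := by
        rw [← smul_sub, add_smul]
        congr 1
        abel

theorem tendstoUniformlyOn_inv_smul_of_weight_atTop {α E : Type*} [NormedAddCommGroup E]
    [NormedSpace ℝ E] {c S : α → ℝ} {V : α → E} {t : Set α} (p : E) {m K : ℝ} (hm : 0 < m)
    (hc : ∀ u ∈ t, m ≤ c u) (hS : ∀ u ∈ t, 0 ≤ S u) (hK : ∀ u ∈ t, ‖S u • p - V u‖ ≤ K) :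
    TendstoUniformlyOn (fun w u => (c u * w + S u)⁻¹ • ((c u * w) • p + V u))
      (fun _ => p) atTop t := by
  have hbound : Tendsto (fun w : ℝ => K / (m * w)) atTop (𝓝 0) :=
    tendsto_const_nhds.div_atTop (tendsto_id.const_mul_atTop hm)
  refine tendstoUniformlyOn_of_forall_dist_le hbound ?_
  filter_upwards [eventually_gt_atTop 0] with w hw u hu
  have hmw : 0 < m * w := mul_pos hm hw
  have hD : m * w ≤ c u * w + S u := by
    linarith [mul_le_mul_of_nonneg_right (hc u hu) hw.le, hS u hu]
  have hD0 : 0 < c u * w + S u := hmw.trans_le hD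
  rw [dist_eq_norm, sub_inv_smul_add_smul_add hD0.ne', norm_smul, Real.norm_of_nonneg
    (inv_nonneg.2 hD0.le), inv_mul_eq_div]
  calc ‖S u • p - V u‖ / (c u * w + S u) ≤ ‖S u • p - V u‖ / (m * w) :=
        div_le_div_of_nonneg_left (norm_nonneg _) hmw hD
    _ ≤ K / (m * w) := div_le_div_of_nonneg_right (hK u hu) hmw.le

theorem nurbs_one_weight_to_infinity_tendstoUniformly_control_point_general {ι : Type*} [DecidableEq ι]
    (s : Finset ι) (k : ι) (hk : k ∈ s) (a b : ℝ)
    (N : ι → ℝ → ℝ)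
    (hNcont : ∀ j ∈ s, ContinuousOn (N j) (Set.Icc a b))
    (hNnonneg : ∀ j ∈ s, ∀ u ∈ Set.Icc a b, 0 ≤ N j u)
    (hNk : ∀ u ∈ Set.Icc a b, 0 < N k u)
    (p : ι → EuclideanSpace ℝ (Fin 2))
    (ω : ι → ℝ) (hω : ∀ j ∈ s, j ≠ k → 0 < ω j) :
    TendstoUniformlyOn
      (fun w : ℝ => fun u : ℝ =>
        (N k u * w + ∑ j ∈ s.erase k, N j u * ω j)⁻¹ •
          ((N k u * w) • p k + ∑ j ∈ s.erase k, (N j u * ω j) • p j))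
      (fun _ : ℝ => p k) atTop (Set.Icc a b) := by
  obtain ⟨m, hm, hNk_ge⟩ := isCompact_Icc.exists_forall_le' (hNcont k hk) hNk
  have hcont : ∀ j ∈ s.erase k, ContinuousOn (fun u => N j u * ω j) (Set.Icc a b) :=
    fun j hj => (hNcont j (Finset.mem_of_mem_erase hj)).mul continuousOn_const
  have hS : ContinuousOn (fun u => ∑ j ∈ s.erase k, N j u * ω j) (Set.Icc a b) :=
    continuousOn_finsetSum _ hcont
  have hV : ContinuousOn (fun u => ∑ j ∈ s.erase k, (N j u * ω j) • p j) (Set.Icc a b) :=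
    continuousOn_finsetSum _ fun j hj => (hcont j hj).smul continuousOn_const
  obtain ⟨K, hK⟩ :=
    isCompact_Icc.exists_bound_of_continuousOn ((hS.smul continuousOn_const).sub hV)
  refine tendstoUniformlyOn_inv_smul_of_weight_atTop (p k) hm hNk_ge (fun u hu => ?_) hK
  refine Finset.sum_nonneg fun j hj => mul_nonneg ?_ ?_
  · exact hNnonneg j (Finset.mem_of_mem_erase hj) u hu
  · exact (hω j (Finset.mem_of_mem_erase hj) (Finset.ne_of_mem_erase hj)).le

/-- Let `s` be a finite index set, `k ∈ s`, `a < b`, and for each `j ∈ s` let `N j` be continuous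
and nonnegative on `[a,b]`, with `N k` strictly positive on `[a,b]`.  For control points
`p j ∈ ℝ²` and fixed positive weights `ω j` (`j ≠ k`), the curves
`u ↦ (N k u · ω · p k + Σ_{j ≠ k} N j u · ω j · p j) / (N k u · ω + Σ_{j ≠ k} N j u · ω j)`
converge uniformly on `[a,b]` to the constant function `u ↦ p k` as `ω → +∞`. -/
theorem nurbs_one_weight_to_infinity_tendstoUniformly_control_point {ι : Type*} [DecidableEq ι]
    (s : Finset ι) (k : ι) (hk : k ∈ s) (a b : ℝ) (hab : a < b)
    (N : ι → ℝ → ℝ)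
    (hNcont : ∀ j ∈ s, ContinuousOn (N j) (Set.Icc a b))
    (hNnonneg : ∀ j ∈ s, ∀ u ∈ Set.Icc a b, 0 ≤ N j u)
    (hNk : ∀ u ∈ Set.Icc a b, 0 < N k u)
    (p : ι → EuclideanSpace ℝ (Fin 2))
    (ω : ι → ℝ) (hω : ∀ j ∈ s, j ≠ k → 0 < ω j) :
    TendstoUniformlyOn
      (fun w : ℝ => fun u : ℝ =>
        (N k u * w + ∑ j ∈ s.erase k, N j u * ω j)⁻¹ •
          ((N k u * w) • p k + ∑ j ∈ s.erase k, (N j u * ω j) • p j))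
      (fun _ : ℝ => p k) atTop (Set.Icc a b) :=
  nurbs_one_weight_to_infinity_tendstoUniformly_control_point_general s k hk a b N hNcont hNnonneg
    hNk p ω hω
end

section
/- Let s be a finite index set, J₀ ⊆ s a nonempty subset, a < b real numbers, and for each j ∈ s let N_j : ℝ → ℝ be continuous on [a,b] with N_j(u) ≥ 0 for all u ∈ [a,b]. Fix constants k_j > 0 for j ∈ J₀, fixed weights ω_j > 0 for j ∉ J₀, and control points p_j ∈ ℝ². Assume Σ_{j ∈ J₀} k_j·N_j(u) > 0 for all u ∈ [a,b]. For t > 0 define C_t(u) = (Σ_{j ∈ J₀} N_j(u)·k_j t·p_j + Σ_{j ∉ J₀} N_j(u)·ω_j·p_j) / (Σ_{j ∈ J₀} N_j(u)·k_j t + Σ_{j ∉ J₀} N_j(u)·ω_j). Then C_t converges uniformly on [a,b], as t → +∞, to the function u ↦ (Σ_{j ∈ J₀} k_j·N_j(u)·p_j) / (Σ_{j ∈ J₀} k_j·N_j(u)). -/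
open Filter Topology

/-!
With `D = Σ_{J₀} k j N j`, `A = Σ_{J₀} (k j N j) • p j` and `E`, `B` the sums over `s \ J₀`,
the curve is `(t D + E)⁻¹ • (t A + B)`, and its distance to `D⁻¹ • A` is
`‖E • A - D • B‖ / ((t D + E) D)`. By compactness `D ≥ δ > 0` and `‖E • A - D • B‖ ≤ M` on
`[a, b]`, and `E ≥ 0`, so this distance is at most `M / (δ² t)` uniformly in `u`.
-/

theorem inv_smul_sub_inv_smul_add_eq {𝕜 V : Type*} [Field 𝕜] [AddCommGroup V] [Module 𝕜 V]
    {d e t : 𝕜} (a b : V) (hd : d ≠ 0) (h : t * d + e ≠ 0) :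
    d⁻¹ • a - (t * d + e)⁻¹ • (t • a + b) = ((t * d + e) * d)⁻¹ • (e • a - d • b) := by
  have h' : d * t + e ≠ 0 := by rwa [mul_comm]
  match_scalars
  · field_simp
    ring
  · field_simp

theorem tendstoUniformlyOn_of_eventually_dist_le {ι α β : Type*} [PseudoMetricSpace β]
    {F : ι → α → β} {f : α → β} {l : Filter ι} {K : Set α} {g : ι → ℝ}
    (hg : Tendsto g l (𝓝 0)) (h : ∀ᶠ t in l, ∀ x ∈ K, dist (f x) (F t x) ≤ g t) :
    TendstoUniformlyOn F f l K := by
  rw [Metric.tendstoUniformlyOn_iff]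
  intro ε hε
  filter_upwards [h, hg (Iio_mem_nhds hε)] with t hdist hgε x hx
  exact (hdist x hx).trans_lt hgε

theorem tendstoUniformlyOn_inv_smul_of_dominant {X V : Type*} [TopologicalSpace X]
    [NormedAddCommGroup V] [NormedSpace ℝ V] {K : Set X} (hK : IsCompact K)
    {d e : X → ℝ} {a b : X → V} (hd : ContinuousOn d K) (hd_pos : ∀ x ∈ K, 0 < d x)
    (he : ContinuousOn e K) (he_nonneg : ∀ x ∈ K, 0 ≤ e x)
    (ha : ContinuousOn a K) (hb : ContinuousOn b K) :
    TendstoUniformlyOn (fun t x => (t * d x + e x)⁻¹ • (t • a x + b x)) (fun x => (d x)⁻¹ • a x)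
      atTop K := by
  obtain ⟨δ, hδ, hδd⟩ := hK.exists_forall_le' hd hd_pos
  obtain ⟨M, hM⟩ := hK.exists_bound_of_continuousOn ((he.smul ha).sub (hd.smul hb))
  refine tendstoUniformlyOn_of_eventually_dist_le (g := fun t => M / (δ ^ 2 * t))
    (tendsto_const_nhds.div_atTop (tendsto_id.const_mul_atTop (by positivity))) ?_
  filter_upwards [eventually_gt_atTop 0] with t ht x hx
  have hdx : δ ≤ d x := hδd x hx
  have hdx_pos : 0 < d x := hd_pos x hx
  have hex : 0 ≤ e x := he_nonneg x hx
  have hden : δ ^ 2 * t ≤ (t * d x + e x) * d x := by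
    nlinarith [mul_le_mul hdx hdx hδ.le hdx_pos.le]
  rw [dist_eq_norm, inv_smul_sub_inv_smul_add_eq _ _ (by positivity) (by positivity), norm_smul,
    norm_inv, Real.norm_of_nonneg (by positivity), inv_mul_eq_div]
  exact div_le_div₀ ((norm_nonneg _).trans (hM x hx)) (hM x hx) (by positivity) hden

theorem nurbs_dominant_weights_tendstoUniformly_general {ι : Type*} [DecidableEq ι]
    (s J₀ : Finset ι) (hJ₀s : J₀ ⊆ s)
    (a b : ℝ)
    (N : ι → ℝ → ℝ)
    (hNcont : ∀ j ∈ s, ContinuousOn (N j) (Set.Icc a b))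
    (hNnonneg : ∀ j ∈ s, ∀ u ∈ Set.Icc a b, 0 ≤ N j u)
    (k : ι → ℝ)
    (ω : ι → ℝ) (hωpos : ∀ j ∈ s \ J₀, 0 < ω j)
    (p : ι → EuclideanSpace ℝ (Fin 2))
    (hden : ∀ u ∈ Set.Icc a b, 0 < ∑ j ∈ J₀, k j * N j u) :
    TendstoUniformlyOn
      (fun t : ℝ => fun u : ℝ =>
        ((∑ j ∈ J₀, N j u * (k j * t)) + ∑ j ∈ s \ J₀, N j u * ω j)⁻¹ •
          ((∑ j ∈ J₀, (N j u * (k j * t)) • p j) + ∑ j ∈ s \ J₀, (N j u * ω j) • p j))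
      (fun u : ℝ =>
        (∑ j ∈ J₀, k j * N j u)⁻¹ • ∑ j ∈ J₀, (k j * N j u) • p j)
      atTop (Set.Icc a b) := by
  have hNcont₀ : ∀ j ∈ J₀, ContinuousOn (N j) (Set.Icc a b) := fun j hj => hNcont j (hJ₀s hj)
  have hNcont₁ : ∀ j ∈ s \ J₀, ContinuousOn (N j) (Set.Icc a b) :=
    fun j hj => hNcont j (Finset.sdiff_subset hj)
  refine (tendstoUniformlyOn_inv_smul_of_dominant isCompact_Icc
    (d := fun u => ∑ j ∈ J₀, k j * N j u) (e := fun u => ∑ j ∈ s \ J₀, N j u * ω j)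
    (a := fun u => ∑ j ∈ J₀, (k j * N j u) • p j)
    (b := fun u => ∑ j ∈ s \ J₀, (N j u * ω j) • p j)
    (continuousOn_finsetSum _ fun j hj => continuousOn_const.mul (hNcont₀ j hj)) hden
    (continuousOn_finsetSum _ fun j hj => (hNcont₁ j hj).mul continuousOn_const)
    (fun u hu => Finset.sum_nonneg fun j hj =>
      mul_nonneg (hNnonneg j (Finset.sdiff_subset hj) u hu) (hωpos j hj).le)
    (continuousOn_finsetSum _ fun j hj =>
      (continuousOn_const.mul (hNcont₀ j hj)).smul continuousOn_const)
    (continuousOn_finsetSum _ fun j hj =>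
      ((hNcont₁ j hj).mul continuousOn_const).smul continuousOn_const)).congr
    (Eventually.of_forall fun t u _ => ?_)
  have hden_t : ∑ j ∈ J₀, N j u * (k j * t) = t * ∑ j ∈ J₀, k j * N j u := by
    rw [Finset.mul_sum]
    exact Finset.sum_congr rfl fun j _ => by ring
  have hnum_t : ∑ j ∈ J₀, (N j u * (k j * t)) • p j = t • ∑ j ∈ J₀, (k j * N j u) • p j := by
    rw [Finset.smul_sum]
    exact Finset.sum_congr rfl fun j _ => by rw [smul_smul]; congr 1; ring
  simp only [hden_t, hnum_t]

/-- Let `s` be a finite index set, `J₀ ⊆ s` a nonempty subset, `a < b`, and for each `j ∈ s` let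
`N j` be continuous and nonnegative on `[a,b]`.  Fix constants `k j > 0` for `j ∈ J₀`, fixed
weights `ω j > 0` for `j ∈ s \ J₀`, and control points `p j ∈ ℝ²`, and assume
`Σ_{j ∈ J₀} k j · N j u > 0` on `[a,b]`.  Then the curves
`C_t(u) = (Σ_{j ∈ J₀} N j u · (k j · t) · p j + Σ_{j ∉ J₀} N j u · ω j · p j) /
(Σ_{j ∈ J₀} N j u · (k j · t) + Σ_{j ∉ J₀} N j u · ω j)` converge uniformly on `[a,b]`, as
`t → +∞`, to `u ↦ (Σ_{j ∈ J₀} k j · N j u · p j) / (Σ_{j ∈ J₀} k j · N j u)`. -/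
theorem nurbs_dominant_weights_tendstoUniformly {ι : Type*} [DecidableEq ι]
    (s J₀ : Finset ι) (hJ₀s : J₀ ⊆ s) (hJ₀ : J₀.Nonempty)
    (a b : ℝ) (hab : a < b)
    (N : ι → ℝ → ℝ)
    (hNcont : ∀ j ∈ s, ContinuousOn (N j) (Set.Icc a b))
    (hNnonneg : ∀ j ∈ s, ∀ u ∈ Set.Icc a b, 0 ≤ N j u)
    (k : ι → ℝ) (hkpos : ∀ j ∈ J₀, 0 < k j)
    (ω : ι → ℝ) (hωpos : ∀ j ∈ s \ J₀, 0 < ω j)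
    (p : ι → EuclideanSpace ℝ (Fin 2))
    (hden : ∀ u ∈ Set.Icc a b, 0 < ∑ j ∈ J₀, k j * N j u) :
    TendstoUniformlyOn
      (fun t : ℝ => fun u : ℝ =>
        ((∑ j ∈ J₀, N j u * (k j * t)) + ∑ j ∈ s \ J₀, N j u * ω j)⁻¹ •
          ((∑ j ∈ J₀, (N j u * (k j * t)) • p j) + ∑ j ∈ s \ J₀, (N j u * ω j) • p j))
      (fun u : ℝ =>
        (∑ j ∈ J₀, k j * N j u)⁻¹ • ∑ j ∈ J₀, (k j * N j u) • p j)
      atTop (Set.Icc a b) :=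
  nurbs_dominant_weights_tendstoUniformly_general s J₀ hJ₀s a b N hNcont hNnonneg k ω hωpos p hden
end

section
/- Let s be a finite index set and J₀ ⊆ s a nonempty subset, and let a < b be real numbers. For each j ∈ s let N_j : ℝ → ℝ be continuous on [a,b] with N_j(u) ≥ 0 for all u ∈ [a,b]. For each j ∈ s let ω_j : ℝ → ℝ satisfy ω_j(t) > 0 for all large t and ω_j(t)/t → k_j as t → +∞, with k_j > 0 for j ∈ J₀ and k_j = 0 for j ∉ J₀. Fix control points p_j ∈ ℝ², and assume that for every u ∈ [a,b] both Σ_{j ∈ s} N_j(u)·ω_j(t) > 0 (for all large t) and Σ_{j ∈ J₀} k_j·N_j(u) > 0. Define C_t(u) = (Σ_{j ∈ s} N_j(u)·ω_j(t)·p_j) / (Σ_{j ∈ s} N_j(u)·ω_j(t)) and C_∞(u) = (Σ_{j ∈ J₀} k_j·N_j(u)·p_j) / (Σ_{j ∈ J₀} k_j·N_j(u)). Then C_t → C_∞ in L¹: ∫_a^b ‖C_t(u) − C_∞(u)‖ du → 0 as t → +∞. -/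
/-!
The curve `C_t(u)` is the center of mass of the control points with weights `N j u * ω j t`.
Dividing all weights by `t` does not change it, and the rescaled weights converge to
`k j * N j u`, which vanish off `J₀`; so `C_t → C_∞` pointwise.  Both curves lie in the convex
hull of the control points, hence in a fixed ball, and the bounded convergence theorem turns
pointwise convergence into convergence in `L¹`.
-/

open Filter Topology MeasureTheory Set
open scoped Interval

section CenterMass

variable {ι E : Type*} [NormedAddCommGroup E] [NormedSpace ℝ E] {s : Finset ι} {z : ι → E}

theorem Finset.norm_centerMass_le {w : ι → ℝ} {M : ℝ} (hw : ∀ i ∈ s, 0 ≤ w i)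
    (hpos : 0 < ∑ i ∈ s, w i) (hz : ∀ i ∈ s, ‖z i‖ ≤ M) : ‖s.centerMass w z‖ ≤ M := by
  simpa using (convex_closedBall (0 : E) M).centerMass_mem hw hpos (by simpa using hz)

theorem Filter.Tendsto.finset_centerMass {α : Type*} {l : Filter α} {w : α → ι → ℝ}
    {w₀ : ι → ℝ} (hw : ∀ i ∈ s, Tendsto (fun x => w x i) l (𝓝 (w₀ i)))
    (h₀ : ∑ i ∈ s, w₀ i ≠ 0) :
    Tendsto (fun x => s.centerMass (w x) z) l (𝓝 (s.centerMass w₀ z)) :=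
  ((tendsto_finsetSum s hw).inv₀ h₀).smul
    (tendsto_finsetSum s fun i hi => (hw i hi).smul_const (z i))

theorem ContinuousOn.finset_centerMass {X : Type*} [TopologicalSpace X] {S : Set X}
    {w : X → ι → ℝ} (hw : ∀ i ∈ s, ContinuousOn (fun x => w x i) S)
    (h₀ : ∀ x ∈ S, ∑ i ∈ s, w x i ≠ 0) : ContinuousOn (fun x => s.centerMass (w x) z) S :=
  fun x hx => Tendsto.finset_centerMass (fun i hi => hw i hi x hx) (h₀ x hx)

theorem Finset.tendsto_centerMass_of_tendsto_div_atTop {w : ℝ → ι → ℝ} {w₀ : ι → ℝ}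
    (hw : ∀ i ∈ s, Tendsto (fun t => w t i / t) atTop (𝓝 (w₀ i))) (h₀ : ∑ i ∈ s, w₀ i ≠ 0) :
    Tendsto (fun t => s.centerMass (w t) z) atTop (𝓝 (s.centerMass w₀ z)) := by
  refine (Tendsto.finset_centerMass hw h₀).congr' ?_
  filter_upwards [eventually_ne_atTop 0] with t ht
  simp only [div_eq_inv_mul]
  exact s.centerMass_smul_left (w := w t) z (inv_ne_zero ht)

end CenterMass

theorem Finset.sum_mul_pos_of_sum_mul_pos {ι : Type*} {s t : Finset ι} {c d w : ι → ℝ}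
    (ht : t ⊆ s) (hc : ∀ i ∈ s, 0 ≤ c i) (hw : ∀ i ∈ s, 0 < w i)
    (hd : 0 < ∑ i ∈ t, d i * c i) : 0 < ∑ i ∈ s, c i * w i := by
  obtain ⟨i, hi, hdc⟩ := exists_lt_of_sum_lt (f := fun _ => (0 : ℝ)) (g := fun i => d i * c i)
    (by simpa using hd)
  have hci : 0 < c i := (hc i (ht hi)).lt_of_ne fun h => by simp [← h] at hdc
  exact sum_pos' (fun j hj => mul_nonneg (hc j hj) (hw j hj).le)
    ⟨i, ht hi, mul_pos hci (hw i (ht hi))⟩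

theorem tendsto_intervalIntegral_norm_sub_of_tendsto_of_bounded {α E : Type*}
    [NormedAddCommGroup E] {l : Filter α} [l.NeBot] [l.IsCountablyGenerated] {a b M : ℝ}
    {F : α → ℝ → E} {f : ℝ → E} (hF : ∀ᶠ t in l, ContinuousOn (F t) [[a, b]])
    (hf : ContinuousOn f [[a, b]]) (hFM : ∀ᶠ t in l, ∀ u ∈ [[a, b]], ‖F t u‖ ≤ M)
    (hlim : ∀ u ∈ [[a, b]], Tendsto (fun t => F t u) l (𝓝 (f u))) :
    Tendsto (fun t => ∫ u in a..b, ‖F t u - f u‖) l (𝓝 0) := by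
  have hfM : ∀ u ∈ [[a, b]], ‖f u‖ ≤ M := fun u hu =>
    le_of_tendsto (hlim u hu).norm (hFM.mono fun t ht => ht u hu)
  have hsub : Ι a b ⊆ [[a, b]] := uIoc_subset_uIcc
  have hdom := intervalIntegral.tendsto_integral_filter_of_dominated_convergence
    (μ := volume) (F := fun t u => ‖F t u - f u‖) (f := fun _ => 0) (fun _ => M + M)
    (hF.mono fun t ht => (((ht.sub hf).norm).mono hsub).aestronglyMeasurable measurableSet_uIoc)
    (hFM.mono fun t ht => ae_of_all _ fun u hu => by
      rw [norm_norm]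
      exact (norm_sub_le _ _).trans (add_le_add (ht u (hsub hu)) (hfM u (hsub hu))))
    intervalIntegrable_const
    (ae_of_all _ fun u hu => by simpa using ((hlim u (hsub hu)).sub_const (f u)).norm)
  simpa using hdom

theorem nurbs_L1_convergence_along_weight_path_general {ι : Type*} [DecidableEq ι]
    (s J₀ : Finset ι) (hJ₀s : J₀ ⊆ s)
    (a b : ℝ) (hab : a < b)
    (N : ι → ℝ → ℝ)
    (hNcont : ∀ j ∈ s, ContinuousOn (N j) (Set.Icc a b))
    (hNnonneg : ∀ j ∈ s, ∀ u ∈ Set.Icc a b, 0 ≤ N j u)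
    (ω : ι → ℝ → ℝ) (k : ι → ℝ)
    (hωpos : ∀ j ∈ s, ∀ᶠ t in atTop, 0 < ω j t)
    (hωk : ∀ j ∈ s, Tendsto (fun t : ℝ => ω j t / t) atTop (𝓝 (k j)))
    (hkzero : ∀ j ∈ s \ J₀, k j = 0)
    (p : ι → EuclideanSpace ℝ (Fin 2))
    (hdenLimit : ∀ u ∈ Set.Icc a b, 0 < ∑ j ∈ J₀, k j * N j u) :
    Tendsto
      (fun t : ℝ =>
        ∫ u in a..b,
          ‖(∑ j ∈ s, N j u * ω j t)⁻¹ • (∑ j ∈ s, (N j u * ω j t) • p j) -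
            (∑ j ∈ J₀, k j * N j u)⁻¹ • (∑ j ∈ J₀, (k j * N j u) • p j)‖)
      atTop (𝓝 0) := by
  have hI : [[a, b]] = Icc a b := uIcc_of_le hab.le
  have hω : ∀ᶠ t in atTop, ∀ j ∈ s, 0 < ω j t := (eventually_all_finset s).2 hωpos
  have hden : ∀ᶠ t in atTop, ∀ u ∈ Icc a b, 0 < ∑ j ∈ s, N j u * ω j t := by
    filter_upwards [hω] with t ht u hu
    exact Finset.sum_mul_pos_of_sum_mul_pos hJ₀s (fun j hj => hNnonneg j hj u hu) ht
      (hdenLimit u hu)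
  have hvanish : ∀ u, ∀ j ∈ s, j ∉ J₀ → k j * N j u = 0 := fun u j hj hj' => by
    rw [hkzero j (Finset.mem_sdiff.2 ⟨hj, hj'⟩), zero_mul]
  refine tendsto_intervalIntegral_norm_sub_of_tendsto_of_bounded
    (F := fun t u => s.centerMass (fun j => N j u * ω j t) p)
    (f := fun u => J₀.centerMass (fun j => k j * N j u) p) (M := ∑ j ∈ s, ‖p j‖)
    ?_ ?_ ?_ ?_ <;> simp only [hI]
  · filter_upwards [hden] with t ht
    exact ContinuousOn.finset_centerMass (fun j hj => (hNcont j hj).mul continuousOn_const)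
      fun u hu => (ht u hu).ne'
  · exact ContinuousOn.finset_centerMass
      (fun j hj => continuousOn_const.mul (hNcont j (hJ₀s hj))) fun u hu => (hdenLimit u hu).ne'
  · filter_upwards [hω, hden] with t ht htu u hu
    exact Finset.norm_centerMass_le (fun j hj => mul_nonneg (hNnonneg j hj u hu) (ht j hj).le)
      (htu u hu) fun j hj => Finset.single_le_sum (fun i _ => norm_nonneg (p i)) hj
  · intro u hu
    rw [Finset.centerMass_subset p hJ₀s (hvanish u)]
    refine Finset.tendsto_centerMass_of_tendsto_div_atTop (fun j hj => ?_)
      (by rw [← Finset.sum_subset hJ₀s (hvanish u)]; exact (hdenLimit u hu).ne')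
    rw [mul_comm (k j)]
    simpa only [mul_div_assoc] using (hωk j hj).const_mul (N j u)

/-- Let `s` be a finite index set, `J₀ ⊆ s` nonempty, `a < b`, and for each `j ∈ s` let `N j` be
continuous and nonnegative on `[a,b]`.  For each `j ∈ s` let `ω j : ℝ → ℝ` be eventually positive
with `ω j t / t → k j` as `t → +∞`, where `k j > 0` for `j ∈ J₀` and `k j = 0` for `j ∈ s \ J₀`.
Fix control points `p j ∈ ℝ²` and assume that for every `u ∈ [a,b]` the denominator
`Σ_{j ∈ s} N j u · ω j t` is eventually positive and `Σ_{j ∈ J₀} k j · N j u > 0`.  Then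
`C_t(u) = (Σ_{j ∈ s} N j u · ω j t · p j) / (Σ_{j ∈ s} N j u · ω j t)` converges in `L¹` to
`C_∞(u) = (Σ_{j ∈ J₀} k j · N j u · p j) / (Σ_{j ∈ J₀} k j · N j u)`:
`∫_a^b ‖C_t(u) − C_∞(u)‖ du → 0` as `t → +∞`. -/
theorem nurbs_L1_convergence_along_weight_path {ι : Type*} [DecidableEq ι]
    (s J₀ : Finset ι) (hJ₀s : J₀ ⊆ s) (hJ₀ : J₀.Nonempty)
    (a b : ℝ) (hab : a < b)
    (N : ι → ℝ → ℝ)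
    (hNcont : ∀ j ∈ s, ContinuousOn (N j) (Set.Icc a b))
    (hNnonneg : ∀ j ∈ s, ∀ u ∈ Set.Icc a b, 0 ≤ N j u)
    (ω : ι → ℝ → ℝ) (k : ι → ℝ)
    (hωpos : ∀ j ∈ s, ∀ᶠ t in atTop, 0 < ω j t)
    (hωk : ∀ j ∈ s, Tendsto (fun t : ℝ => ω j t / t) atTop (𝓝 (k j)))
    (hkpos : ∀ j ∈ J₀, 0 < k j) (hkzero : ∀ j ∈ s \ J₀, k j = 0)
    (p : ι → EuclideanSpace ℝ (Fin 2))
    (hdenpos : ∀ u ∈ Set.Icc a b, ∀ᶠ t in atTop, 0 < ∑ j ∈ s, N j u * ω j t)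
    (hdenLimit : ∀ u ∈ Set.Icc a b, 0 < ∑ j ∈ J₀, k j * N j u) :
    Tendsto
      (fun t : ℝ =>
        ∫ u in a..b,
          ‖(∑ j ∈ s, N j u * ω j t)⁻¹ • (∑ j ∈ s, (N j u * ω j t) • p j) -
            (∑ j ∈ J₀, k j * N j u)⁻¹ • (∑ j ∈ J₀, (k j * N j u) • p j)‖)
      atTop (𝓝 0) :=
  nurbs_L1_convergence_along_weight_path_general s J₀ hJ₀s a b hab N hNcont hNnonneg ω k hωpos hωk
    hkzero p hdenLimit
end
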